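/- Let $\Phi$ be a finite crystallographic root system in a Euclidean space with Weyl group $W$, positive roots $\Phi^+$, and $\rho$ half the sum of positive roots (equivalently, $\langle \rho, \alpha^\vee \rangle = 1$ for each simple root $\alpha$). Let $\lambda$ be a dominant element of the coweight lattice and let $\mu = w(\lambda)$ for some $w \in W$. Set $\Phi^-_\mu := \{\alpha \in \Phi^- : \langle \alpha, \mu \rangle > 0\}$ (negative roots pairing positively with $\mu$). Then $\sum_{\alpha \in \Phi^-_\mu} \langle \alpha, \mu \rangle = \langle \rho, \lambda - \mu \rangle$. -/

import Mathlib

open scoped RealInnerProductSpace Classical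

/-- A finite crystallographic root system with a choice of positive system,
realized in a Euclidean space: roots are nonzero, closed under negation and
under root reflections, positivity is cut out by a linear functional not
vanishing on any root, and Cartan integers are integers. -/
def IsRootSystemData {V : Type*} [NormedAddCommGroup V] [InnerProductSpace ℝ V]
    (Φ pos : Finset V) : Prop :=
  (∀ α ∈ Φ, α ≠ (0 : V)) ∧
  (∀ α ∈ Φ, -α ∈ Φ) ∧
  pos ⊆ Φ ∧
  (∃ f : V →ₗ[ℝ] ℝ, (∀ α ∈ Φ, f α ≠ 0) ∧ (∀ α ∈ Φ, (α ∈ pos ↔ 0 < f α))) ∧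
  (∀ α ∈ Φ, ∀ β ∈ Φ, β - (2 * ⟪β, α⟫ / ⟪α, α⟫) • α ∈ Φ) ∧
  (∀ α ∈ Φ, ∀ β ∈ Φ, ∃ n : ℤ, 2 * ⟪β, α⟫ / ⟪α, α⟫ = (n : ℝ))

/-- The Weyl group of the root system: the subgroup of linear automorphisms
generated by the reflections in the roots. -/
def weylGroup {V : Type*} [NormedAddCommGroup V] [InnerProductSpace ℝ V]
    (Φ : Finset V) : Subgroup (V ≃ₗ[ℝ] V) :=
  Subgroup.closure
    {g : V ≃ₗ[ℝ] V | ∃ α ∈ Φ, ∀ x : V, g x = x - (2 * ⟪x, α⟫ / ⟪α, α⟫) • α}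

/-!
The function `x ↦ ∑_{α ∈ Φ} ⟨α, x⟩⁺` is invariant under the Weyl group, which permutes `Φ`
and preserves the inner product. Splitting `Φ = Φ⁺ ⊔ -Φ⁺` and writing `t = t⁺ - t⁻` gives
`∑_{α ∈ Φ} ⟨α, x⟩⁺ = 2⟨ρ, x⟩ + 2 ∑_{α ∈ Φ⁻} ⟨α, x⟩⁺`; the last sum is the left-hand side at
`x = μ` and vanishes at the dominant `x = λ`. Comparing the identity at `μ = wλ` and at `λ`
gives the theorem.
-/

open Finset
open scoped Pointwise

section

variable {V : Type*} [NormedAddCommGroup V] [InnerProductSpace ℝ V]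

lemma inner_sub_reflection_sub_reflection (α x y : V) :
    ⟪x - (2 * ⟪x, α⟫ / ⟪α, α⟫) • α, y - (2 * ⟪y, α⟫ / ⟪α, α⟫) • α⟫ = ⟪x, y⟫ := by
  rcases eq_or_ne α 0 with rfl | hα
  · simp -- for `α = 0` the formula is the identity, as `x / 0 = 0`
  have hαα : ⟪α, α⟫ ≠ 0 := by simpa using hα
  simp only [inner_sub_left, inner_sub_right, real_inner_smul_left, real_inner_smul_right,
    real_inner_comm α x, real_inner_comm y α]
  field_simp
  ring

lemma inner_apply_apply_of_mem_weylGroup {Φ : Finset V} {w : V ≃ₗ[ℝ] V}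
    (hw : w ∈ weylGroup Φ) (x y : V) : ⟪w x, w y⟫ = ⟪x, y⟫ := by
  induction hw using Subgroup.closure_induction generalizing x y with
  | mem g hg =>
    obtain ⟨α, -, hg⟩ := hg
    rw [hg, hg, inner_sub_reflection_sub_reflection]
  | one => rfl
  | mul a b _ _ ha hb => exact (ha _ _).trans (hb x y)
  | inv a _ ha => simpa using (ha (a⁻¹ x) (a⁻¹ y)).symm

lemma weylGroup_le_stabilizer {Φ : Finset V}
    (hrefl : ∀ α ∈ Φ, ∀ β ∈ Φ, β - (2 * ⟪β, α⟫ / ⟪α, α⟫) • α ∈ Φ) :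
    weylGroup Φ ≤ MulAction.stabilizer (V ≃ₗ[ℝ] V) Φ := by
  refine Subgroup.closure_le _ |>.mpr ?_
  rintro g ⟨α, hα, hg⟩
  refine eq_of_subset_of_card_le ?_ (card_smul_finset g Φ).ge
  intro _ hx
  obtain ⟨β, hβ, rfl⟩ := mem_smul_finset.mp hx
  rw [LinearEquiv.smul_def, hg]
  exact hrefl α hα β hβ

lemma sum_posPart_inner_apply_of_mem_weylGroup {Φ : Finset V}
    (hrefl : ∀ α ∈ Φ, ∀ β ∈ Φ, β - (2 * ⟪β, α⟫ / ⟪α, α⟫) • α ∈ Φ) {w : V ≃ₗ[ℝ] V}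
    (hw : w ∈ weylGroup Φ) (x : V) : ∑ α ∈ Φ, ⟪α, w x⟫⁺ = ∑ α ∈ Φ, ⟪α, x⟫⁺ := by
  calc ∑ α ∈ Φ, ⟪α, w x⟫⁺ = ∑ α ∈ w • Φ, ⟪α, w x⟫⁺ := by
        rw [MulAction.mem_stabilizer_iff.mp (weylGroup_le_stabilizer hrefl hw)]
    _ = ∑ α ∈ Φ, ⟪w α, w x⟫⁺ := sum_image w.injective.injOn
    _ = ∑ α ∈ Φ, ⟪α, x⟫⁺ := by simp_rw [inner_apply_apply_of_mem_weylGroup hw]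

lemma Finset.sum_filter_pos_eq_sum_posPart {ι : Type*} (s : Finset ι) (f : ι → ℝ) :
    ∑ i ∈ s.filter (0 < f ·), f i = ∑ i ∈ s, (f i)⁺ := by
  rw [sum_filter]
  exact sum_congr rfl fun i _ => posPart_eq_ite_lt.symm

namespace IsRootSystemData

variable {Φ pos : Finset V}

lemma neg_mem_pos_iff (hrs : IsRootSystemData Φ pos) {α : V} (hα : α ∈ Φ) :
    -α ∈ pos ↔ α ∉ pos := by
  obtain ⟨-, hneg, -, ⟨f, hf0, hfpos⟩, -⟩ := hrs
  rw [hfpos _ (hneg α hα), hfpos α hα, map_neg, neg_pos, not_lt]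
  exact ⟨le_of_lt, fun h => lt_of_le_of_ne h (hf0 α hα)⟩

lemma sum_sdiff_eq_sum_neg {M : Type*} [AddCommMonoid M] (hrs : IsRootSystemData Φ pos)
    (g : V → M) : ∑ α ∈ Φ \ pos, g α = ∑ α ∈ pos, g (-α) := by
  refine sum_nbij' Neg.neg Neg.neg (fun α hα => ?_) (fun α hα => ?_) (by simp) (by simp) (by simp)
  · rw [mem_sdiff] at hα
    exact (hrs.neg_mem_pos_iff hα.1).2 hα.2
  · have hα' : -α ∈ Φ := hrs.2.1 α (hrs.2.2.1 hα)
    exact mem_sdiff.2 ⟨hα', (hrs.neg_mem_pos_iff hα').1 (by rwa [neg_neg])⟩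

lemma sum_posPart_inner_eq (hrs : IsRootSystemData Φ pos) (x : V) :
    ∑ α ∈ Φ, ⟪α, x⟫⁺ = ∑ α ∈ pos, ⟪α, x⟫ + 2 * ∑ α ∈ Φ \ pos, ⟪α, x⟫⁺ := by
  have hsplit := sum_sdiff (f := fun α => ⟪α, x⟫⁺) hrs.2.2.1
  have hneg : ∑ α ∈ Φ \ pos, ⟪α, x⟫⁺ = ∑ α ∈ pos, ⟪α, x⟫⁻ := by
    simp only [hrs.sum_sdiff_eq_sum_neg, inner_neg_left, posPart_neg]
  have hdecomp : ∑ α ∈ pos, ⟪α, x⟫ = ∑ α ∈ pos, ⟪α, x⟫⁺ - ∑ α ∈ pos, ⟪α, x⟫⁻ := by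
    simp only [← sum_sub_distrib, posPart_sub_negPart]
  linarith

lemma posPart_inner_eq_zero_of_dominant (hrs : IsRootSystemData Φ pos) {lam : V}
    (hdom : ∀ α ∈ pos, 0 ≤ ⟪α, lam⟫) {α : V} (hα : α ∈ Φ \ pos) : ⟪α, lam⟫⁺ = 0 := by
  rw [mem_sdiff] at hα
  have := hdom (-α) ((hrs.neg_mem_pos_iff hα.1).2 hα.2)
  rw [inner_neg_left] at this
  exact posPart_eq_zero.2 (by linarith)

end IsRootSystemData

end

theorem sum_neg_roots_pairing_eq_rho_pairing_general
    {V : Type*} [NormedAddCommGroup V] [InnerProductSpace ℝ V]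
    (Φ pos : Finset V) (hrs : IsRootSystemData Φ pos)
    (ρ : V) (hρ : ρ = (2 : ℝ)⁻¹ • ∑ α ∈ pos, α)
    (lam : V) (hdom : ∀ α ∈ pos, 0 ≤ ⟪α, lam⟫)
    (w : V ≃ₗ[ℝ] V) (hw : w ∈ weylGroup Φ)
    (μ : V) (hμ : μ = w lam) :
    ∑ α ∈ Φ.filter (fun α => α ∉ pos ∧ 0 < ⟪α, μ⟫), ⟪α, μ⟫ = ⟪ρ, lam - μ⟫ := by
  have hweyl : ∑ α ∈ Φ, ⟪α, μ⟫⁺ = ∑ α ∈ Φ, ⟪α, lam⟫⁺ :=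
    hμ ▸ sum_posPart_inner_apply_of_mem_weylGroup hrs.2.2.2.2.1 hw lam
  have hdom_zero : ∑ α ∈ Φ \ pos, ⟪α, lam⟫⁺ = 0 :=
    sum_eq_zero fun α hα => hrs.posPart_inner_eq_zero_of_dominant hdom hα
  rw [← filter_filter, ← sdiff_eq_filter, sum_filter_pos_eq_sum_posPart, hρ,
    real_inner_smul_left, sum_inner]
  simp only [inner_sub_right, sum_sub_distrib]
  linarith [hrs.sum_posPart_inner_eq μ, hrs.sum_posPart_inner_eq lam]

/-- for a dominant coweight `lam` and `μ = w lam`, the sum of the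
pairings `⟨α, μ⟩` over the negative roots pairing positively with `μ` equals
`⟨ρ, λ - μ⟩`, where `ρ` is the half-sum of positive roots. -/
theorem sum_neg_roots_pairing_eq_rho_pairing
    {V : Type*} [NormedAddCommGroup V] [InnerProductSpace ℝ V]
    (Φ pos : Finset V) (hrs : IsRootSystemData Φ pos)
    (ρ : V) (hρ : ρ = (2 : ℝ)⁻¹ • ∑ α ∈ pos, α)
    (lam : V) (hdom : ∀ α ∈ pos, 0 ≤ ⟪α, lam⟫)
    (hlat : ∀ α ∈ Φ, ∃ n : ℤ, ⟪α, lam⟫ = (n : ℝ))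
    (w : V ≃ₗ[ℝ] V) (hw : w ∈ weylGroup Φ)
    (μ : V) (hμ : μ = w lam) :
    ∑ α ∈ Φ.filter (fun α => α ∉ pos ∧ 0 < ⟪α, μ⟫), ⟪α, μ⟫ = ⟪ρ, lam - μ⟫ :=
  sum_neg_roots_pairing_eq_rho_pairing_general Φ pos hrs ρ hρ lam hdom w hw μ hμ
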